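/- arXiv:2010.04317 — 4 statements merged into one kernel-verified Lean document; each statement's English description precedes it below -/
import Mathlib

section
/- Let n and d be integers with 1 ≤ d < n, let 𝔉 be a nonempty family of d-element subsets of [n], and let Δ be the simplicial complex generated by 𝔉 (so F(Δ) = 𝔉). Then Δ is an f-simplicial complex if and only if 𝔉 is an LU-set and 2·|𝔉| = C(n,d) (the binomial coefficient n choose d). -/
open Finset

/-- `Δ`, given as the finset of its faces, is a simplicial complex on the vertex
set `Fin n`: a nonempty collection of subsets closed under taking subsets. -/
def IsComplex {n : ℕ} (Δ : Finset (Finset (Fin n))) : Prop :=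
  Δ.Nonempty ∧ ∀ A ∈ Δ, ∀ B ⊆ A, B ∈ Δ

/-- The facets (maximal faces) of `Δ`. -/
def facets {n : ℕ} (Δ : Finset (Finset (Fin n))) : Finset (Finset (Fin n)) :=
  Δ.filter fun F => ∀ G ∈ Δ, F ⊆ G → F = G

/-- The simplicial complex generated by a family `𝔉`: all subsets of members of `𝔉`. -/
def generated {n : ℕ} (𝔉 : Finset (Finset (Fin n))) : Finset (Finset (Fin n)) :=
  univ.filter fun A => ∃ F ∈ 𝔉, A ⊆ F

/-- The Newton complement dual `Δ^c`: the complex generated by the complements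
of the facets of `Δ`. -/
def cdual {n : ℕ} (Δ : Finset (Finset (Fin n))) : Finset (Finset (Fin n)) :=
  generated ((facets Δ).image fun F => Fᶜ)

/-- The nonface complex of `Δ`: all subsets of `[n]` containing no facet of `Δ`. -/
def nonfaceComplex {n : ℕ} (Δ : Finset (Finset (Fin n))) : Finset (Finset (Fin n)) :=
  univ.filter fun A => ∀ F ∈ facets Δ, ¬ F ⊆ A

/-- `Δ` is an `f`-simplicial complex: for every `k`, `Δ` and its nonface complex
have the same number of `k`-element members (the same `f`-vector). -/
def IsFComplex {n : ℕ} (Δ : Finset (Finset (Fin n))) : Prop :=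
  ∀ k : ℕ, (Δ.filter fun A => A.card = k).card =
    ((nonfaceComplex Δ).filter fun A => A.card = k).card

/-- `Δ` is pure `(d-1)`-dimensional: every facet has exactly `d` elements. -/
def PureDim {n : ℕ} (d : ℕ) (Δ : Finset (Finset (Fin n))) : Prop :=
  ∀ F ∈ facets Δ, F.card = d

/-- The minimal nonfaces of `Δ`: sets that are not faces but all of whose proper
subsets are faces. -/
def minNonfaces {n : ℕ} (Δ : Finset (Finset (Fin n))) : Finset (Finset (Fin n)) :=
  univ.filter fun A => A ∉ Δ ∧ ∀ B ⊂ A, B ∈ Δ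

/-- The Alexander dual `Δ^∨`: the complex whose facets are the complements of the
minimal nonfaces of `Δ`. -/
def adual {n : ℕ} (Δ : Finset (Finset (Fin n))) : Finset (Finset (Fin n)) :=
  generated ((minNonfaces Δ).image fun F => Fᶜ)

/-- The homogeneous complement `Δ'` (in degree `e`): the complex generated by the
`e`-element subsets of `[n]` that are not facets of `Δ`. -/
def hcompl {n : ℕ} (e : ℕ) (Δ : Finset (Finset (Fin n))) : Finset (Finset (Fin n)) :=
  generated (univ.filter fun A : Finset (Fin n) => A.card = e ∧ A ∉ facets Δ)

/-- `𝔉` is an L-set: every `(d-1)`-element subset of `[n]` is contained in some member. -/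
def IsLSet {n : ℕ} (d : ℕ) (𝔉 : Finset (Finset (Fin n))) : Prop :=
  ∀ A : Finset (Fin n), A.card = d - 1 → ∃ F ∈ 𝔉, A ⊆ F

/-- `𝔉` is a U-set: every `(d+1)`-element subset of `[n]` contains some member. -/
def IsUSet {n : ℕ} (d : ℕ) (𝔉 : Finset (Finset (Fin n))) : Prop :=
  ∀ A : Finset (Fin n), A.card = d + 1 → ∃ F ∈ 𝔉, F ⊆ A

/-- `𝔉` is an LU-set: both an L-set and a U-set. -/
def IsLUSet {n : ℕ} (d : ℕ) (𝔉 : Finset (Finset (Fin n))) : Prop :=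
  IsLSet d 𝔉 ∧ IsUSet d 𝔉

/-!
Compare the two `f`-vectors size by size. Faces of `Δ` have at most `d` elements, while every set
with fewer than `d` elements is in the nonface complex. So below `d` the counts agree iff every
such set is a face of `Δ` (the L-property), above `d` iff no such set is in the nonface complex
(the U-property), and in size `d` the counts are `|𝔉|` and `C(n,d) - |𝔉|`.
-/

lemma Finset.card_slice_eq_choose_iff {α : Type*} [Fintype α] {𝒜 : Finset (Finset α)} {r : ℕ} :
    #(𝒜.slice r) = (Fintype.card α).choose r ↔ ∀ A : Finset α, #A = r → A ∈ 𝒜 := by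
  have hsub : 𝒜.slice r ⊆ powersetCard r univ := (sized_slice (𝒜 := 𝒜)).subset_powersetCard_univ
  rw [← card_univ, ← card_powersetCard, le_antisymm_iff, and_iff_right (card_le_card hsub),
    eq_iff_card_le_of_subset hsub]
  refine ⟨fun h A hA => ?_, fun h => ?_⟩
  · exact (mem_slice.1 (h ▸ mem_powersetCard_univ.2 hA)).1
  · ext A
    rw [mem_slice, mem_powersetCard_univ]
    exact ⟨And.right, fun hA => ⟨h A hA, hA⟩⟩

section

variable {n : ℕ}

@[simp]
lemma mem_generated {𝔉 : Finset (Finset (Fin n))} {A : Finset (Fin n)} :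
    A ∈ generated 𝔉 ↔ ∃ F ∈ 𝔉, A ⊆ F := by
  simp [generated]

@[simp]
lemma mem_nonfaceComplex {Δ : Finset (Finset (Fin n))} {A : Finset (Fin n)} :
    A ∈ nonfaceComplex Δ ↔ ∀ F ∈ facets Δ, ¬ F ⊆ A := by
  simp [nonfaceComplex]

lemma isFComplex_iff {Δ : Finset (Finset (Fin n))} :
    IsFComplex Δ ↔ ∀ k, #(Δ.slice k) = #((nonfaceComplex Δ).slice k) :=
  Iff.rfl

lemma card_slice_nonfaceComplex_eq_zero_iff {Δ : Finset (Finset (Fin n))} {k : ℕ} :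
    #((nonfaceComplex Δ).slice k) = 0 ↔ ∀ A : Finset (Fin n), #A = k → ∃ F ∈ facets Δ, F ⊆ A := by
  simp only [card_eq_zero, eq_empty_iff_forall_notMem, mem_slice, mem_nonfaceComplex, not_and]
  refine forall_congr' fun A => ⟨fun h hA => ?_, fun h hno hA => ?_⟩
  · by_contra! hno
    exact h hno hA
  · obtain ⟨F, hF, hFA⟩ := h hA
    exact hno F hF hFA

lemma isLSet_iff {d : ℕ} {𝔉 : Finset (Finset (Fin n))} (hd : 1 ≤ d) (hdn : d ≤ n + 1) :
    IsLSet d 𝔉 ↔ ∀ k < d, ∀ A : Finset (Fin n), #A = k → ∃ F ∈ 𝔉, A ⊆ F := by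
  refine ⟨fun hL k hk A hA => ?_, fun h => h (d - 1) (by omega)⟩
  obtain ⟨B, hAB, -, hB⟩ := exists_subsuperset_card_eq (subset_univ A) (n := d - 1)
    (by omega) (by rw [card_univ, Fintype.card_fin]; omega)
  obtain ⟨F, hF, hBF⟩ := hL B hB
  exact ⟨F, hF, hAB.trans hBF⟩

lemma isUSet_iff {d : ℕ} {𝔉 : Finset (Finset (Fin n))} :
    IsUSet d 𝔉 ↔ ∀ k, d < k → ∀ A : Finset (Fin n), #A = k → ∃ F ∈ 𝔉, F ⊆ A := by
  refine ⟨fun hU k hk A hA => ?_, fun h => h (d + 1) (by omega)⟩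
  obtain ⟨B, hBA, hB⟩ := exists_subset_card_eq (s := A) (n := d + 1) (by omega)
  obtain ⟨F, hF, hFB⟩ := hU B hB
  exact ⟨F, hF, hFB.trans hBA⟩

end

section Sized

variable {n d : ℕ} {𝔉 : Finset (Finset (Fin n))} (h𝔉 : (𝔉 : Set (Finset (Fin n))).Sized d)
include h𝔉

lemma facets_generated : facets (generated 𝔉) = 𝔉 := by
  ext A
  simp only [facets, mem_filter, mem_generated]
  constructor
  · rintro ⟨⟨F, hF, hAF⟩, hmax⟩
    rwa [hmax F ⟨F, hF, Subset.rfl⟩ hAF]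
  · intro hA
    refine ⟨⟨A, hA, Subset.rfl⟩, fun G ⟨F, hF, hGF⟩ hAG => ?_⟩
    have hAF : A = F := h𝔉.isAntichain.eq hA hF (hAG.trans hGF)
    exact Subset.antisymm hAG (hAF ▸ hGF)

lemma slice_generated_self : (generated 𝔉).slice d = 𝔉 := by
  ext A
  rw [mem_slice, mem_generated]
  refine ⟨fun ⟨⟨F, hF, hAF⟩, hA⟩ => ?_, fun hA => ⟨⟨A, hA, Subset.rfl⟩, h𝔉 hA⟩⟩
  rwa [eq_of_subset_of_card_le hAF (by rw [hA, h𝔉 hF])]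

lemma card_slice_generated_of_lt {k : ℕ} (hdk : d < k) : #((generated 𝔉).slice k) = 0 := by
  simp only [card_eq_zero, eq_empty_iff_forall_notMem, mem_slice, mem_generated, not_and]
  rintro A ⟨F, hF, hAF⟩ rfl
  have := h𝔉 hF ▸ card_le_card hAF
  omega

lemma card_slice_nonfaceComplex_generated_of_lt {k : ℕ} (hkd : k < d) :
    #((nonfaceComplex (generated 𝔉)).slice k) = n.choose k := by
  refine (Fintype.card_fin n ▸ card_slice_eq_choose_iff).2 fun A hA => ?_
  rw [mem_nonfaceComplex, facets_generated h𝔉]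
  intro F hF hFA
  have := h𝔉 hF ▸ card_le_card hFA
  omega

lemma card_slice_nonfaceComplex_generated_self :
    #((nonfaceComplex (generated 𝔉)).slice d) = n.choose d - #𝔉 := by
  have hslice : (nonfaceComplex (generated 𝔉)).slice d = powersetCard d univ \ 𝔉 := by
    ext A
    rw [mem_slice, mem_nonfaceComplex, facets_generated h𝔉, mem_sdiff, mem_powersetCard_univ]
    refine ⟨fun ⟨hno, hA⟩ => ⟨hA, fun hA' => hno A hA' Subset.rfl⟩, fun ⟨hA, hA'⟩ => ⟨?_, hA⟩⟩
    intro F hF hFA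
    rw [eq_of_subset_of_card_le hFA (by rw [hA, h𝔉 hF])] at hF
    exact hA' hF
  rw [hslice, card_sdiff_of_subset h𝔉.subset_powersetCard_univ, card_powersetCard, card_univ,
    Fintype.card_fin]

lemma isFComplex_generated_iff : IsFComplex (generated 𝔉) ↔
    (∀ k < d, ∀ A : Finset (Fin n), #A = k → ∃ F ∈ 𝔉, A ⊆ F) ∧ 2 * #𝔉 = n.choose d ∧
      ∀ k, d < k → ∀ A : Finset (Fin n), #A = k → ∃ F ∈ 𝔉, F ⊆ A := by
  have below : ∀ k < d, #((generated 𝔉).slice k) = #((nonfaceComplex (generated 𝔉)).slice k) ↔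
      ∀ A : Finset (Fin n), #A = k → ∃ F ∈ 𝔉, A ⊆ F := fun k hk => by
    rw [card_slice_nonfaceComplex_generated_of_lt h𝔉 hk]
    simpa only [mem_generated, Fintype.card_fin] using
      card_slice_eq_choose_iff (𝒜 := generated 𝔉) (r := k)
  have at_d : #((generated 𝔉).slice d) = #((nonfaceComplex (generated 𝔉)).slice d) ↔
      2 * #𝔉 = n.choose d := by
    have := h𝔉.card_le
    rw [Fintype.card_fin] at this
    rw [slice_generated_self h𝔉, card_slice_nonfaceComplex_generated_self h𝔉]
    omega
  have above : ∀ k, d < k → (#((generated 𝔉).slice k) = #((nonfaceComplex (generated 𝔉)).slice k) ↔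
      ∀ A : Finset (Fin n), #A = k → ∃ F ∈ 𝔉, F ⊆ A) := fun k hk => by
    rw [card_slice_generated_of_lt h𝔉 hk, eq_comm, card_slice_nonfaceComplex_eq_zero_iff,
      facets_generated h𝔉]
  rw [isFComplex_iff]
  refine ⟨fun h => ⟨fun k hk => (below k hk).1 (h k), at_d.1 (h d),
    fun k hk => (above k hk).1 (h k)⟩, fun ⟨hlt, hcount, hgt⟩ k => ?_⟩
  rcases lt_trichotomy k d with hk | rfl | hk
  · exact (below k hk).2 (hlt k hk)
  · exact at_d.2 hcount
  · exact (above k hk).2 (hgt k hk)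

end Sized

theorem stmt0_general {n d : ℕ} (hd : 1 ≤ d) (hdn : d < n)
    (𝔉 : Finset (Finset (Fin n)))
    (hcard : ∀ F ∈ 𝔉, F.card = d) :
    IsFComplex (generated 𝔉) ↔ IsLUSet d 𝔉 ∧ 2 * 𝔉.card = n.choose d := by
  rw [isFComplex_generated_iff hcard, IsLUSet, isLSet_iff hd (by omega), isUSet_iff]
  tauto

/-- the complex generated by a nonempty family `𝔉` of `d`-element subsets
of `[n]` is an `f`-simplicial complex iff `𝔉` is an LU-set and `2|𝔉| = C(n,d)`. -/
theorem stmt0 {n d : ℕ} (hd : 1 ≤ d) (hdn : d < n)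
    (𝔉 : Finset (Finset (Fin n))) (hne : 𝔉.Nonempty)
    (hcard : ∀ F ∈ 𝔉, F.card = d) :
    IsFComplex (generated 𝔉) ↔ IsLUSet d 𝔉 ∧ 2 * 𝔉.card = n.choose d :=
  stmt0_general hd hdn 𝔉 hcard
end

section
/- Let 1 ≤ d < n and let Δ be a pure (d−1)-dimensional simplicial complex on [n] such that some d-element subset of [n] is not a facet of Δ (so that Δ' is defined) and such that F(Δ) is not all of [n]_d nor empty. Then (Δ^c)' = (Δ')^c, i.e., the homogeneous complement of the Newton complement dual of Δ equals the Newton complement dual of the homogeneous complement of Δ. -/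
open Finset

/-!
Both sides are generated by a family of equal-size sets, and such a family is exactly the facet
set of the complex it generates. Complementation is a bijection from `d`-sets to `(n - d)`-sets,
so it carries the `d`-sets that are not facets of `Δ` onto the `(n - d)`-sets that are not
facets of `Δ^c`.
-/

lemma facets_generated_of_card_eq {n e : ℕ} {𝔉 : Finset (Finset (Fin n))}
    (hcard : ∀ F ∈ 𝔉, F.card = e) : facets (generated 𝔉) = 𝔉 := by
  ext A
  simp only [facets, generated, mem_filter, mem_univ, true_and]
  constructor
  · rintro ⟨⟨F, hF, hAF⟩, hmax⟩
    exact hmax F ⟨F, hF, subset_rfl⟩ hAF ▸ hF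
  · intro hA
    refine ⟨⟨A, hA, subset_rfl⟩, ?_⟩
    rintro G ⟨F, hF, hGF⟩ hAG
    have hAF : A = F :=
      eq_of_subset_of_card_le (hAG.trans hGF) (by rw [hcard A hA, hcard F hF])
    exact hAG.antisymm (hAF ▸ hGF)

lemma facets_cdual {n d : ℕ} {Δ : Finset (Finset (Fin n))} (hpure : PureDim d Δ) :
    facets (cdual Δ) = (facets Δ).image compl := by
  refine facets_generated_of_card_eq (e := n - d) ?_
  rintro _ hF
  obtain ⟨G, hG, rfl⟩ := mem_image.mp hF
  rw [card_compl, hpure G hG, Fintype.card_fin]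

lemma facets_hcompl {n : ℕ} (d : ℕ) (Δ : Finset (Finset (Fin n))) :
    facets (hcompl d Δ) = univ.filter fun A => A.card = d ∧ A ∉ facets Δ :=
  facets_generated_of_card_eq fun _ hF => (mem_filter.mp hF).2.1

lemma image_compl_filter_card_eq_and_notMem {n d : ℕ} (hdn : d ≤ n)
    (𝔉 : Finset (Finset (Fin n))) :
    (univ.filter fun A => A.card = d ∧ A ∉ 𝔉).image compl =
      univ.filter fun A => A.card = n - d ∧ A ∉ 𝔉.image compl := by
  ext A
  simp only [image_compl, mem_compls, mem_filter, mem_univ, true_and, card_compl,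
    Fintype.card_fin]
  have hA_le : A.card ≤ n := by simpa using A.card_le_univ
  constructor <;> rintro ⟨hcard, hA⟩ <;> exact ⟨by omega, hA⟩

theorem stmt5_general {n d : ℕ} (hdn : d < n)
    (Δ : Finset (Finset (Fin n))) (hpure : PureDim d Δ) :
    hcompl (n - d) (cdual Δ) = cdual (hcompl d Δ) := by
  rw [hcompl, facets_cdual hpure, cdual, facets_hcompl,
    image_compl_filter_card_eq_and_notMem hdn.le]

/-- for a pure `(d-1)`-dimensional complex `Δ` on `[n]` whose facet set is a
nonempty proper subfamily of the `d`-element subsets, `(Δ^c)' = (Δ')^c`. (Here `Δ^c` is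
pure `(n-d-1)`-dimensional, so its homogeneous complement is taken in degree `n - d`.) -/
theorem stmt5 {n d : ℕ} (hd : 1 ≤ d) (hdn : d < n)
    (Δ : Finset (Finset (Fin n))) (hΔ : IsComplex Δ) (hpure : PureDim d Δ)
    (hne : (facets Δ).Nonempty)
    (hproper : ∃ A : Finset (Fin n), A.card = d ∧ A ∉ facets Δ) :
    hcompl (n - d) (cdual Δ) = cdual (hcompl d Δ) :=
  stmt5_general hdn Δ hpure
end

section
/- Let 1 ≤ d < n and let Δ be a strong f-simplicial complex on [n] that is pure (d−1)-dimensional with facet set a nonempty proper subset of [n]_d. Then the set of minimal nonfaces of Δ equals the set of facets of its homogeneous complement: N(Δ) = F(Δ'). -/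
open Finset

/-!
Purity makes every set with fewer than `d` elements a member of the nonface complex of `Δ`,
so equality of `f`-vectors forces `Δ` to contain all of them: every `d`-set that is not a facet
is then a minimal nonface, and no minimal nonface is smaller. Dually, `Δ'` has no faces with
`d + 1` elements, so neither has its nonface complex: every `(d + 1)`-set contains a facet of
`Δ'`, i.e. a `d`-set that is not a face of `Δ`, and no minimal nonface is larger.
-/

section

variable {n d : ℕ} {Δ : Finset (Finset (Fin n))} {A : Finset (Fin n)}

lemma exists_mem_facets_superset (hA : A ∈ Δ) : ∃ F ∈ facets Δ, A ⊆ F := by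
  obtain ⟨F, hAF, hF⟩ := Δ.exists_le_maximal hA
  exact ⟨F, mem_filter.2 ⟨hF.prop, fun G hG hFG => le_antisymm hFG (hF.2 hG hFG)⟩, hAF⟩

lemma PureDim.mem_facets_of_card_eq (hpure : PureDim d Δ) (hA : A ∈ Δ) (hAd : A.card = d) :
    A ∈ facets Δ := by
  obtain ⟨F, hF, hAF⟩ := exists_mem_facets_superset hA
  rwa [eq_of_subset_of_card_le hAF (by rw [hpure F hF, hAd])]

lemma mem_hcompl_iff :
    A ∈ hcompl d Δ ↔ ∃ F : Finset (Fin n), F.card = d ∧ F ∉ facets Δ ∧ A ⊆ F := by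
  simp only [hcompl, generated, mem_filter, mem_univ, true_and, and_assoc]

lemma card_le_of_mem_hcompl (hA : A ∈ hcompl d Δ) : A.card ≤ d := by
  obtain ⟨F, hFd, -, hAF⟩ := mem_hcompl_iff.1 hA
  exact hFd ▸ card_le_card hAF

lemma mem_facets_hcompl_iff : A ∈ facets (hcompl d Δ) ↔ A.card = d ∧ A ∉ facets Δ := by
  have mem_of_card_eq {B : Finset (Fin n)} (hBd : B.card = d) (hBF : B ∉ facets Δ) :
      B ∈ hcompl d Δ :=
    mem_hcompl_iff.2 ⟨B, hBd, hBF, Subset.rfl⟩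
  constructor
  · intro h
    obtain ⟨hA, hmax⟩ := mem_filter.1 h
    obtain ⟨F, hFd, hFΔ, hAF⟩ := mem_hcompl_iff.1 hA
    obtain rfl : A = F := hmax F (mem_of_card_eq hFd hFΔ) hAF
    exact ⟨hFd, hFΔ⟩
  · rintro ⟨hAd, hAF⟩
    refine mem_filter.2 ⟨mem_of_card_eq hAd hAF, fun G hG hAG => ?_⟩
    exact eq_of_subset_of_card_le hAG (hAd ▸ card_le_of_mem_hcompl hG)

lemma IsFComplex.mem_of_card_lt (hf : IsFComplex Δ) (hpure : PureDim d Δ) (hA : A.card < d) :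
    A ∈ Δ := by
  have hnon : (nonfaceComplex Δ).filter (·.card = A.card) = univ.filter (·.card = A.card) := by
    ext B
    simp only [nonfaceComplex, mem_filter, mem_univ, true_and, and_iff_right_iff_imp]
    intro hB F hF hFB
    have := card_le_card hFB
    rw [hpure F hF] at this
    omega
  have hall : Δ.filter (·.card = A.card) = univ.filter (·.card = A.card) :=
    eq_of_subset_of_card_le (filter_subset_filter _ (subset_univ Δ)) (by rw [hf, hnon])
  have hA' : A ∈ Δ.filter (·.card = A.card) := hall ▸ mem_filter.2 ⟨mem_univ A, rfl⟩
  exact (mem_filter.1 hA').1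

lemma IsFComplex.exists_facet_subset (hf : IsFComplex Δ) (hk : ∀ B ∈ Δ, B.card ≠ A.card) :
    ∃ F ∈ facets Δ, F ⊆ A := by
  by_contra! h
  have hA : A ∈ (nonfaceComplex Δ).filter (·.card = A.card) :=
    mem_filter.2 ⟨mem_filter.2 ⟨mem_univ A, h⟩, rfl⟩
  have hcard := hf A.card
  rw [filter_eq_empty_iff.2 hk, card_empty, eq_comm, card_eq_zero] at hcard
  exact notMem_empty A (hcard ▸ hA)

lemma exists_nonfacet_subset_of_isFComplex_hcompl (hf' : IsFComplex (hcompl d Δ))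
    (hA : A.card = d + 1) : ∃ F : Finset (Fin n), F.card = d ∧ F ∉ facets Δ ∧ F ⊆ A := by
  obtain ⟨F, hF, hFA⟩ := hf'.exists_facet_subset (A := A) fun B hB => by
    have := card_le_of_mem_hcompl hB
    omega
  obtain ⟨hFd, hFΔ⟩ := mem_facets_hcompl_iff.1 hF
  exact ⟨F, hFd, hFΔ, hFA⟩

lemma card_eq_of_mem_minNonfaces (hpure : PureDim d Δ) (hf : IsFComplex Δ)
    (hf' : IsFComplex (hcompl d Δ)) (hA : A ∈ minNonfaces Δ) : A.card = d := by
  obtain ⟨-, hAΔ, hmin⟩ := mem_filter.1 hA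
  have hge : d ≤ A.card := by
    by_contra! hlt
    exact hAΔ (hf.mem_of_card_lt hpure hlt)
  refine le_antisymm ?_ hge
  by_contra! hgt
  obtain ⟨B, hBA, hB⟩ := exists_subset_card_eq (show d + 1 ≤ A.card by omega)
  obtain ⟨F, hFd, hFΔ, hFB⟩ := exists_nonfacet_subset_of_isFComplex_hcompl hf' hB
  have hFA : F ⊂ A := ssubset_of_subset_of_ne (hFB.trans hBA) (by rintro rfl; omega)
  exact hFΔ (hpure.mem_facets_of_card_eq (hmin F hFA) hFd)

lemma mem_minNonfaces_of_card_eq (hpure : PureDim d Δ) (hf : IsFComplex Δ) (hAd : A.card = d)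
    (hAF : A ∉ facets Δ) : A ∈ minNonfaces Δ :=
  mem_filter.2 ⟨mem_univ A, fun hA => hAF (hpure.mem_facets_of_card_eq hA hAd),
    fun _ hB => hf.mem_of_card_lt hpure (hAd ▸ card_lt_card hB)⟩

end

theorem stmt7_general {n d : ℕ}
    (Δ : Finset (Finset (Fin n))) (hpure : PureDim d Δ)
    (hstrong : IsFComplex Δ ∧ IsFComplex (hcompl d Δ)) :
    minNonfaces Δ = facets (hcompl d Δ) := by
  obtain ⟨hf, hf'⟩ := hstrong
  ext A
  rw [mem_facets_hcompl_iff]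
  constructor
  · intro hA
    have hAΔ : A ∉ Δ := (mem_filter.1 hA).2.1
    exact ⟨card_eq_of_mem_minNonfaces hpure hf hf' hA, fun hAF => hAΔ (filter_subset _ Δ hAF)⟩
  · rintro ⟨hAd, hAF⟩
    exact mem_minNonfaces_of_card_eq hpure hf hAd hAF

/-- for a strong `f`-simplicial complex `Δ` on `[n]`, pure `(d-1)`-dimensional,
with facet set a nonempty proper subfamily of the `d`-element subsets, the minimal nonfaces
of `Δ` are exactly the facets of the homogeneous complement `Δ'`. -/
theorem stmt7 {n d : ℕ} (hd : 1 ≤ d) (hdn : d < n)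
    (Δ : Finset (Finset (Fin n))) (hΔ : IsComplex Δ) (hpure : PureDim d Δ)
    (hne : (facets Δ).Nonempty)
    (hproper : ∃ A : Finset (Fin n), A.card = d ∧ A ∉ facets Δ)
    (hstrong : IsFComplex Δ ∧ IsFComplex (hcompl d Δ)) :
    minNonfaces Δ = facets (hcompl d Δ) :=
  stmt7_general Δ hpure hstrong
end

section
/- Let d ≥ 1, let n = 2d, and let Δ be a well-distributed f-simplicial complex on [n]. Then every (d−1)-element subset of [n] is a face of Δ^c. -/
open Finset

/-! A pure `(d-1)`-dimensional complex has no faces with more than `d` elements, so by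
the equality of `f`-vectors its nonface complex has none either: every set with more than
`d` elements contains a facet. For `n = 2d`, the complement of a `(d-1)`-set has `d+1`
elements, hence contains a facet `F`, and the set itself lies in the facet `Fᶜ` of `Δ^c`. -/

section

variable {n d : ℕ} {Δ : Finset (Finset (Fin n))}

theorem exists_mem_facets_superset_s9 {B : Finset (Fin n)} (hB : B ∈ Δ) :
    ∃ F ∈ facets Δ, B ⊆ F := by
  obtain ⟨G, hG, hGmax⟩ :=
    exists_max_image (Δ.filter (B ⊆ ·)) card ⟨B, mem_filter.2 ⟨hB, subset_rfl⟩⟩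
  rw [mem_filter] at hG
  refine ⟨G, mem_filter.2 ⟨hG.1, fun H hH hGH => ?_⟩, hG.2⟩
  exact eq_of_subset_of_card_le hGH (hGmax H (mem_filter.2 ⟨hH, hG.2.trans hGH⟩))

theorem PureDim.card_le (hpure : PureDim d Δ) {B : Finset (Fin n)} (hB : B ∈ Δ) :
    B.card ≤ d := by
  obtain ⟨F, hF, hBF⟩ := exists_mem_facets_superset_s9 hB
  exact hpure F hF ▸ card_le_card hBF

theorem IsFComplex.exists_mem_facets_subset (hf : IsFComplex Δ) (hpure : PureDim d Δ)
    {A : Finset (Fin n)} (hA : d < A.card) : ∃ F ∈ facets Δ, F ⊆ A := by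
  have hfaces : (Δ.filter fun B => B.card = A.card) = ∅ :=
    filter_eq_empty_iff.2 fun B hB hBA => (hpure.card_le hB).not_gt (hBA ▸ hA)
  have hnonfaces : ((nonfaceComplex Δ).filter fun B => B.card = A.card) = ∅ :=
    card_eq_zero.1 (hfaces ▸ hf A.card).symm
  have hA_nonface : A ∉ nonfaceComplex Δ := fun h =>
    notMem_empty A (hnonfaces ▸ mem_filter.2 ⟨h, rfl⟩)
  simpa [nonfaceComplex] using hA_nonface

theorem mem_cdual_iff {A : Finset (Fin n)} :
    A ∈ cdual Δ ↔ ∃ F ∈ facets Δ, Disjoint A F := by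
  simp only [cdual, generated, mem_filter, mem_univ, true_and, exists_mem_image,
    subset_compl_iff_disjoint_right]

theorem IsFComplex.mem_cdual_of_card_add_lt (hf : IsFComplex Δ) (hpure : PureDim d Δ)
    {A : Finset (Fin n)} (hA : A.card + d < n) : A ∈ cdual Δ := by
  have hAc : d < Aᶜ.card := by
    rw [card_compl, Fintype.card_fin]
    omega
  obtain ⟨F, hF, hFA⟩ := hf.exists_mem_facets_subset hpure hAc
  exact mem_cdual_iff.2 ⟨F, hF, (subset_compl_iff_disjoint_right.1 hFA).symm⟩

end

theorem stmt9_general {d n : ℕ} (hd : 1 ≤ d) (hn : n = 2 * d)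
    (Δ : Finset (Finset (Fin n))) (hpure : PureDim d Δ)
    (hf : IsFComplex Δ) :
    ∀ A : Finset (Fin n), A.card = d - 1 → A ∈ cdual Δ :=
  fun _ hA => hf.mem_cdual_of_card_add_lt hpure (by omega)

/-- for a well-distributed `f`-simplicial complex `Δ` (`n = 2d`, pure
`(d-1)`-dimensional, `F(Δ) ∩ F(Δ^c) = ∅`), every `(d-1)`-element subset of `[n]` is a
face of `Δ^c`. -/
theorem stmt9 {d n : ℕ} (hd : 1 ≤ d) (hn : n = 2 * d)
    (Δ : Finset (Finset (Fin n))) (hΔ : IsComplex Δ) (hpure : PureDim d Δ)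
    (hf : IsFComplex Δ) (hwd : facets Δ ∩ facets (cdual Δ) = ∅) :
    ∀ A : Finset (Fin n), A.card = d - 1 → A ∈ cdual Δ :=
  stmt9_general hd hn Δ hpure hf
end
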